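/- arXiv:1209.4988 — 2 statements merged into one kernel-verified Lean document; each statement's English description precedes it below -/
import Mathlib

section
/- Let 0 < θ < ε ≤ 1 and let k, N be integers with k ≥ 2 and N ≥ ⌈k(k-1)/(2(ε^k - θ^k))⌉. If (A_i)_{i=1}^N is a family of measurable events in a probability space (Ω, Σ, μ) with μ(A_i) ≥ ε for all i ∈ [N], then there exists a subset F of [N] of cardinality k such that μ(⋂_{i∈F} A_i) ≥ θ^k. -/
/-!
Let `X ω` be the number of events containing `ω`. Then `𝔼 X ≥ ε N`, so `𝔼 X ^ k ≥ (ε N) ^ k` by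
Jensen, and `X ^ k` exceeds the falling factorial `X (X - 1) ⋯ (X - k + 1)` by at most
`(k choose 2) N ^ (k - 1)`. The expectation of that falling factorial is `k!` times the sum of
`μ (⋂ i ∈ F, A i)` over the `N choose k` sets `F` of size `k`, so the average of these measures is
at least `((ε N) ^ k - (k choose 2) N ^ (k - 1)) / N ^ k ≥ θ ^ k` by the choice of `N`.
All expectations are finite sums over the atoms cut out by the events, indexed by the set of
events containing a point.
-/

open MeasureTheory Finset
open scoped Nat

theorem Nat.mul_descFactorial (n k : ℕ) :
    n * n.descFactorial k = n.descFactorial (k + 1) + k * n.descFactorial k := by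
  rcases le_or_gt k n with hkn | hnk
  · rw [Nat.descFactorial_succ, ← add_mul, Nat.sub_add_cancel hkn]
  · simp [Nat.descFactorial_eq_zero_iff_lt.2 hnk]

theorem Nat.pow_le_descFactorial_add_choose_two_mul (n k : ℕ) :
    n ^ k ≤ n.descFactorial k + k.choose 2 * n ^ (k - 1) := by
  induction k with
  | zero => simp
  | succ k ih =>
    have hchoose : k.choose 2 * n ^ (k - 1) * n ≤ k.choose 2 * n ^ k := by
      rcases k with _ | k
      · simp
      · simp [pow_succ, mul_assoc]
    calc n ^ (k + 1) = n ^ k * n := pow_succ n k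
      _ ≤ (n.descFactorial k + k.choose 2 * n ^ (k - 1)) * n := Nat.mul_le_mul_right n ih
      _ ≤ n.descFactorial (k + 1) + k * n ^ k + k.choose 2 * n ^ k := by
        rw [add_mul, mul_comm _ n, Nat.mul_descFactorial]
        gcongr
        exact Nat.descFactorial_le_pow n k
      _ = n.descFactorial (k + 1) + (k + 1).choose 2 * n ^ (k + 1 - 1) := by
        rw [Nat.choose_succ_succ', Nat.choose_one_right, Nat.add_sub_cancel]
        ring

namespace Finset
variable {ι : Type*} [Fintype ι] [DecidableEq ι]

theorem sum_powersetCard_sum_superset {M : Type*} [AddCommMonoid M] (w : Finset ι → M) (k : ℕ) :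
    ∑ F ∈ powersetCard k univ, ∑ t with F ⊆ t, w t = ∑ t, t.card.choose k • w t := by
  simp_rw [sum_filter]
  rw [sum_comm]
  refine sum_congr rfl fun t _ => ?_
  rw [← sum_filter, sum_const, ← card_powersetCard]
  congr 2
  ext F
  simp [mem_powersetCard, and_comm]

theorem sum_sum_superset_singleton {M : Type*} [AddCommMonoid M] (w : Finset ι → M) :
    ∑ i, ∑ t with {i} ⊆ t, w t = ∑ t, t.card • w t := by
  simpa [powersetCard_one] using sum_powersetCard_sum_superset w 1

/-- `w` is the law of a random subset of `ι`; `∑ t with F ⊆ t, w t` is the probability that it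
contains `F`. -/
theorem exists_card_eq_pow_le_sum_superset (w : Finset ι → ℝ) (hw₀ : ∀ t, 0 ≤ w t)
    (hw₁ : ∑ t, w t = 1) {θ ε : ℝ} {k : ℕ} (hθ : 0 ≤ θ) (hε : 0 ≤ ε) (hk : k ≠ 0)
    (hkN : k ≤ Fintype.card ι) (hgap : (k.choose 2 : ℝ) ≤ (ε ^ k - θ ^ k) * Fintype.card ι)
    (hA : ∀ i, ε ≤ ∑ t with {i} ⊆ t, w t) :
    ∃ F : Finset ι, F.card = k ∧ θ ^ k ≤ ∑ t with F ⊆ t, w t := by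
  set N := Fintype.card ι with hN_def
  have hmean : ε * N ≤ ∑ t, w t * t.card :=
    calc ε * N = ∑ _i : ι, ε := by simp [mul_comm, N]
      _ ≤ ∑ i, ∑ t with {i} ⊆ t, w t := sum_le_sum fun i _ => hA i
      _ = ∑ t, w t * t.card := by rw [sum_sum_superset_singleton]; simp [mul_comm]
  have hjensen : (ε * N) ^ k ≤ ∑ t, w t * (t.card : ℝ) ^ k :=
    (pow_le_pow_left₀ (by positivity) hmean k).trans
      (Real.pow_arith_mean_le_arith_mean_pow univ w _ (fun t _ => hw₀ t) hw₁
        (fun t _ => by positivity) k)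
  have hpoint (t : Finset ι) :
      (t.card : ℝ) ^ k ≤ t.card.descFactorial k + k.choose 2 * N ^ (k - 1) := by
    have hle : t.card ^ (k - 1) ≤ N ^ (k - 1) := Nat.pow_le_pow_left (card_le_univ t) _
    exact_mod_cast (Nat.pow_le_descFactorial_add_choose_two_mul t.card k).trans (by gcongr)
  have hfalling : k ! * (N.choose k • θ ^ k) ≤ k ! * ∑ t, t.card.choose k • w t :=
    calc k ! * (N.choose k • θ ^ k) = θ ^ k * N.descFactorial k := by
          rw [nsmul_eq_mul, Nat.descFactorial_eq_factorial_mul_choose]; push_cast; ring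
      _ ≤ θ ^ k * N ^ k := by
          gcongr; exact_mod_cast Nat.descFactorial_le_pow N k
      _ ≤ (ε * N) ^ k - k.choose 2 * N ^ (k - 1) := by
          rw [mul_pow, ← mul_pow_sub_one hk (N : ℝ)]
          nlinarith [pow_nonneg (Nat.cast_nonneg (α := ℝ) N) (k - 1)]
      _ ≤ ∑ t, w t * (t.card : ℝ) ^ k - k.choose 2 * N ^ (k - 1) := by gcongr
      _ ≤ ∑ t : Finset ι, w t * (t.card.descFactorial k + k.choose 2 * N ^ (k - 1))
            - k.choose 2 * N ^ (k - 1) := by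
          gcongr with t
          exacts [hw₀ t, hpoint t]
      _ = k ! * ∑ t, t.card.choose k • w t := by
          simp only [mul_add, sum_add_distrib, ← sum_mul, hw₁, one_mul, add_sub_cancel_right,
            mul_sum, nsmul_eq_mul, Nat.descFactorial_eq_factorial_mul_choose, Nat.cast_mul]
          exact sum_congr rfl fun t _ => by ring
  have hchoose : ∑ _F ∈ powersetCard k (univ : Finset ι), θ ^ k ≤
      ∑ F ∈ powersetCard k univ, ∑ t with F ⊆ t, w t := by
    rw [sum_powersetCard_sum_superset, sum_const, card_powersetCard, card_univ, ← hN_def]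
    exact le_of_mul_le_mul_left hfalling (by positivity)
  obtain ⟨F, hF, hle⟩ := exists_le_of_sum_le (powersetCard_nonempty.2 (by simpa using hkN)) hchoose
  exact ⟨F, (mem_powersetCard.1 hF).2, hle⟩

end Finset

section Incidence
variable {Ω ι : Type*} [MeasurableSpace Ω] [Fintype ι] (A : ι → Set Ω)

open Classical in
noncomputable def incidence (ω : Ω) : Finset ι := {i | ω ∈ A i}

variable {A}

theorem measurableSet_incidence_preimage_singleton (hA : ∀ i, MeasurableSet (A i))
    (t : Finset ι) : MeasurableSet (incidence A ⁻¹' {t}) := by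
  classical
  have : incidence A ⁻¹' {t} = ⋂ i, if i ∈ t then A i else (A i)ᶜ := by
    ext ω
    simp only [Set.mem_preimage, Set.mem_singleton_iff, Set.mem_iInter, Finset.ext_iff,
      incidence, mem_filter, mem_univ, true_and]
    refine forall_congr' fun i => ?_
    split_ifs with hi <;> simp [hi]
  rw [this]
  exact .iInter fun i => by split_ifs; exacts [hA i, (hA i).compl]

theorem measureReal_biInter_eq_sum [DecidableEq ι] (μ : Measure Ω) [IsFiniteMeasure μ]
    (hA : ∀ i, MeasurableSet (A i)) (F : Finset ι) :
    μ.real (⋂ i ∈ F, A i) = ∑ t with F ⊆ t, μ.real (incidence A ⁻¹' {t}) := by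
  rw [sum_measureReal_preimage_singleton _
    fun t _ => measurableSet_incidence_preimage_singleton hA t]
  congr 1
  ext ω
  simp [incidence, subset_iff]

end Incidence

theorem stmt_0 {Ω : Type*} [MeasurableSpace Ω] (μ : Measure Ω) [IsProbabilityMeasure μ]
    (θ ε : ℝ) (hθ : 0 < θ) (hθε : θ < ε) (hε : ε ≤ 1)
    (k N : ℕ) (hk : 2 ≤ k)
    (hN : ⌈((k : ℝ) * (k - 1)) / (2 * (ε ^ k - θ ^ k))⌉₊ ≤ N)
    (A : Fin N → Set Ω) (hmeas : ∀ i, MeasurableSet (A i))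
    (hA : ∀ i, ε ≤ (μ (A i)).toReal) :
    ∃ F : Finset (Fin N), F.card = k ∧ θ ^ k ≤ (μ (⋂ i ∈ F, A i)).toReal := by
  have hgap : 0 < ε ^ k - θ ^ k := sub_pos.2 (pow_lt_pow_left₀ hθε hθ.le (by omega))
  have hgap_lt_one : ε ^ k - θ ^ k < 1 := by
    linarith [pow_le_one₀ (n := k) (hθ.le.trans hθε.le) hε, pow_pos hθ k]
  have hchoose : (k.choose 2 : ℝ) ≤ (ε ^ k - θ ^ k) * N := by
    have := (Nat.le_ceil _).trans (Nat.cast_le.2 hN)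
    rw [div_le_iff₀ (by positivity)] at this
    rw [Nat.cast_choose_two]
    linarith
  have hkN : k ≤ N := by
    by_contra! hNk
    have hNk' : (N : ℝ) + 1 ≤ k := by exact_mod_cast hNk
    have hk' : (2 : ℝ) ≤ k := by exact_mod_cast hk
    rw [Nat.cast_choose_two] at hchoose
    nlinarith [(Nat.cast_nonneg (α := ℝ) N)]
  obtain ⟨F, hF, hle⟩ := exists_card_eq_pow_le_sum_superset (k := k)
    (fun t => μ.real (incidence A ⁻¹' {t})) (fun _ => measureReal_nonneg)
    (by simpa using (measureReal_biInter_eq_sum μ hmeas ∅).symm) hθ.le (hθ.le.trans hθε.le)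
    (by omega) (by simpa using hkN) (by simpa using hchoose)
    (fun i => by rw [← measureReal_biInter_eq_sum μ hmeas]; simpa [measureReal_def] using hA i)
  exact ⟨F, hF, by rwa [← measureReal_biInter_eq_sum μ hmeas] at hle⟩
end

section
/- Let 0 < α ≤ β ≤ 1, 0 < ϱ ≤ 1, and define γ₀ = (β + ϱ² - α)^{1/2}, γ₁ = (γ₀ + γ₀²)^{1/2}, γ₂ = (γ₁ + γ₁²)^{1/2}. Assume γ₀ ≤ (α/4)⁴. Suppose S, W are nonempty finite sets, h ≥ 1 is an integer, {S_0,...,S_{h-1}} is a partition of S into nonempty sets, and f : S × W → [0,1] satisfies E_{w∈W} E_{n<h} E_{s∈S_n} f(s,w) ≥ α. Then either (i) there exist w₀ ∈ W and N₀ ⊆ {0,...,h-1} with |N₀| ≥ ϱ³h such that, setting Δ₀ = {s ∈ S : f(s,w₀) ≥ β + ϱ²/2}, we have |Δ₀ ∩ S_n| ≥ ϱ³|S_n| for every n ∈ N₀, or (ii) there exists W* ⊆ W with |W*| ≥ (1-γ₀)|W| such that for every w ∈ W* there exists N*_w ⊆ {0,...,h-1} with |N*_w| ≥ (1-γ₁-ϱ³)h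 such that, setting Δ*_w = {s ∈ S : f(s,w) ≥ α - γ₀ - γ₁ - γ₂}, we have |Δ*_w ∩ S_n| ≥ (1-γ₂)|S_n| for every n ∈ N*_w. -/
open scoped Classical

private lemma aux_sum_le_card_mul {ι : Type*} (s : Finset ι) (g : ι → ℝ) (b : ℝ)
    (hb : ∀ x ∈ s, g x ≤ b) : ∑ x ∈ s, g x ≤ (s.card : ℝ) * b := by
  have := Finset.sum_le_card_nsmul s g b hb
  simpa [nsmul_eq_mul] using this

private lemma aux_card_mul_le_sum {ι : Type*} (s : Finset ι) (g : ι → ℝ) (b : ℝ)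
    (hb : ∀ x ∈ s, b ≤ g x) : (s.card : ℝ) * b ≤ ∑ x ∈ s, g x := by
  have := Finset.card_nsmul_le_sum s g b hb
  simpa [nsmul_eq_mul] using this

set_option maxHeartbeats 2000000 in
theorem stmt_8 {S W : Type*} [Fintype S] [Fintype W] [Nonempty S] [Nonempty W]
    (α β ϱ : ℝ) (hα : 0 < α) (hαβ : α ≤ β) (hβ : β ≤ 1)
    (hϱ0 : 0 < ϱ) (hϱ1 : ϱ ≤ 1)
    (γ₀ γ₁ γ₂ : ℝ)
    (hγ₀ : γ₀ = Real.sqrt (β + ϱ ^ 2 - α))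
    (hγ₁ : γ₁ = Real.sqrt (γ₀ + γ₀ ^ 2))
    (hγ₂ : γ₂ = Real.sqrt (γ₁ + γ₁ ^ 2))
    (hsmall : γ₀ ≤ (α / 4) ^ 4)
    (h : ℕ) (hh : 1 ≤ h)
    (C : Fin h → Finset S) (hCne : ∀ n, (C n).Nonempty)
    (hCdisj : ∀ m n, m ≠ n → Disjoint (C m) (C n))
    (hCcover : ∀ s : S, ∃ n, s ∈ C n)
    (f : S → W → ℝ) (hf0 : ∀ s w, 0 ≤ f s w) (hf1 : ∀ s w, f s w ≤ 1)
    (havg : α ≤ (∑ w : W, (∑ n : Fin h, (∑ s ∈ C n, f s w) / (C n).card) / h) /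
        (Fintype.card W)) :
    (∃ w₀ : W, ∃ N₀ : Finset (Fin h), ϱ ^ 3 * h ≤ (N₀.card : ℝ) ∧
        ∀ n ∈ N₀,
          ϱ ^ 3 * (C n).card ≤
            (((C n).filter fun s => β + ϱ ^ 2 / 2 ≤ f s w₀).card : ℝ)) ∨
    (∃ Wstar : Finset W, (1 - γ₀) * Fintype.card W ≤ (Wstar.card : ℝ) ∧
        ∀ w ∈ Wstar, ∃ Ns : Finset (Fin h), (1 - γ₁ - ϱ ^ 3) * h ≤ (Ns.card : ℝ) ∧
          ∀ n ∈ Ns,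
            (1 - γ₂) * (C n).card ≤
              (((C n).filter fun s => α - γ₀ - γ₁ - γ₂ ≤ f s w).card : ℝ)) := by
  classical
  -- basic numeric facts
  have hα1 : α ≤ 1 := le_trans hαβ hβ
  have hβpos : 0 < β := lt_of_lt_of_le hα hαβ
  have hϱsq : (0 : ℝ) ≤ ϱ ^ 2 := sq_nonneg ϱ
  have hϱ3nn : (0 : ℝ) ≤ ϱ ^ 3 := by positivity
  have hγ₀sq : γ₀ ^ 2 = β + ϱ ^ 2 - α := by
    rw [hγ₀, sq, Real.mul_self_sqrt]; nlinarith
  have hγ₀pos : 0 < γ₀ := by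
    rw [hγ₀]; apply Real.sqrt_pos.2; nlinarith
  have hγ₁sq : γ₁ ^ 2 = γ₀ + γ₀ ^ 2 := by
    rw [hγ₁, sq, Real.mul_self_sqrt]; nlinarith
  have hγ₁pos : 0 < γ₁ := by
    rw [hγ₁]; apply Real.sqrt_pos.2; nlinarith
  have hγ₂sq : γ₂ ^ 2 = γ₁ + γ₁ ^ 2 := by
    rw [hγ₂, sq, Real.mul_self_sqrt]; nlinarith
  have hγ₂pos : 0 < γ₂ := by
    rw [hγ₂]; apply Real.sqrt_pos.2; nlinarith
  have hsmall' : γ₀ ≤ α ^ 4 / 256 := by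
    calc γ₀ ≤ (α / 4) ^ 4 := hsmall
      _ = α ^ 4 / 256 := by ring
  have hα4 : α ^ 4 ≤ 1 := by
    have := pow_le_pow_left₀ hα.le hα1 4
    simpa using this
  have hγ₀le : γ₀ ≤ 1 / 256 := by linarith
  have hϱγ₀ : ϱ ≤ γ₀ := by
    have hs : Real.sqrt (ϱ ^ 2) ≤ Real.sqrt (β + ϱ ^ 2 - α) :=
      Real.sqrt_le_sqrt (by linarith)
    rw [Real.sqrt_sq hϱ0.le] at hs
    rw [hγ₀]; exact hs
  have hϱ4 : ϱ ≤ 1 / 4 := by linarith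
  have hϱ2γ : ϱ ^ 2 ≤ γ₀ ^ 2 := by linarith [hγ₀sq]
  have hϱ3 : ϱ ^ 3 ≤ γ₀ ^ 2 :=
    le_trans (by linarith [mul_nonneg (by linarith : (0:ℝ) ≤ 1 - ϱ) (sq_nonneg ϱ)]) hϱ2γ
  have hϱcube : ϱ ^ 3 ≤ ϱ ^ 2 / 4 := by
    linarith [mul_nonneg (by linarith : (0:ℝ) ≤ 1/4 - ϱ) (sq_nonneg ϱ)]
  -- cardinalities
  have hcpos : ∀ n : Fin h, (0 : ℝ) < ((C n).card : ℝ) := fun n => by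
    exact_mod_cast Finset.card_pos.2 (hCne n)
  have hhpos : (0 : ℝ) < (h : ℝ) := by exact_mod_cast hh
  have hWpos : (0 : ℝ) < (Fintype.card W : ℝ) := by exact_mod_cast Fintype.card_pos
  -- averages
  set a : Fin h → W → ℝ := fun n w => (∑ s ∈ C n, f s w) / ((C n).card : ℝ) with ha
  set g : W → ℝ := fun w => (∑ n : Fin h, a n w) / (h : ℝ) with hg
  have ha0 : ∀ n w, 0 ≤ a n w := by
    intro n w
    apply div_nonneg _ (le_of_lt (hcpos n))
    exact Finset.sum_nonneg fun s _ => hf0 s w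
  have ha1 : ∀ n w, a n w ≤ 1 := by
    intro n w
    rw [ha, div_le_one (hcpos n)]
    have := aux_sum_le_card_mul (C n) (fun s => f s w) 1 (fun s _ => hf1 s w)
    simpa using this
  by_cases hcase : (∃ w₀ : W, ∃ N₀ : Finset (Fin h), ϱ ^ 3 * h ≤ (N₀.card : ℝ) ∧
      ∀ n ∈ N₀, ϱ ^ 3 * (C n).card ≤
        (((C n).filter fun s => β + ϱ ^ 2 / 2 ≤ f s w₀).card : ℝ))
  · exact Or.inl hcase
  push_neg at hcase
  right
  -- the set of "dense" cells for each w is small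
  set M : W → Finset (Fin h) := fun w => Finset.univ.filter
    (fun n => ϱ ^ 3 * (C n).card ≤
      (((C n).filter fun s => β + ϱ ^ 2 / 2 ≤ f s w).card : ℝ)) with hMdef
  have hM : ∀ w, ((M w).card : ℝ) < ϱ ^ 3 * h := by
    intro w
    by_contra hc
    push_neg at hc
    obtain ⟨n, hn, hlt⟩ := hcase w (M w) hc
    exact absurd (Finset.mem_filter.1 hn).2 (not_le.2 hlt)
  -- cell average bound off the dense set
  have ha2 : ∀ w, ∀ n : Fin h, n ∉ M w → a n w ≤ β + ϱ ^ 2 / 2 + ϱ ^ 3 := by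
    intro w n hn
    have hcount : (((C n).filter fun s => β + ϱ ^ 2 / 2 ≤ f s w).card : ℝ) <
        ϱ ^ 3 * (C n).card := by
      by_contra hc
      push_neg at hc
      exact hn (Finset.mem_filter.2 ⟨Finset.mem_univ n, hc⟩)
    rw [ha]
    rw [div_le_iff₀ (hcpos n)]
    have hsplit : ∑ s ∈ C n, f s w =
        (∑ s ∈ (C n).filter (fun s => β + ϱ ^ 2 / 2 ≤ f s w), f s w) +
        ∑ s ∈ (C n).filter (fun s => ¬ (β + ϱ ^ 2 / 2 ≤ f s w)), f s w :=
      (Finset.sum_filter_add_sum_filter_not _ _ _).symm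
    have h1 : (∑ s ∈ (C n).filter (fun s => β + ϱ ^ 2 / 2 ≤ f s w), f s w) ≤
        ϱ ^ 3 * ((C n).card : ℝ) := by
      have := aux_sum_le_card_mul ((C n).filter (fun s => β + ϱ ^ 2 / 2 ≤ f s w))
        (fun s => f s w) 1 (fun s _ => hf1 s w)
      rw [mul_one] at this
      exact le_trans this (le_of_lt hcount)
    have h2 : (∑ s ∈ (C n).filter (fun s => ¬ (β + ϱ ^ 2 / 2 ≤ f s w)), f s w) ≤
        ((C n).card : ℝ) * (β + ϱ ^ 2 / 2) := by
      have hb := aux_sum_le_card_mul ((C n).filter (fun s => ¬ (β + ϱ ^ 2 / 2 ≤ f s w)))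
        (fun s => f s w) (β + ϱ ^ 2 / 2)
        (fun s hs => le_of_lt (not_le.1 (Finset.mem_filter.1 hs).2))
      have hcard : ((((C n).filter (fun s => ¬ (β + ϱ ^ 2 / 2 ≤ f s w))).card : ℝ)) ≤
          ((C n).card : ℝ) := by
        exact_mod_cast Finset.card_le_card (Finset.filter_subset _ _)
      have hb0 : (0 : ℝ) ≤ β + ϱ ^ 2 / 2 := by linarith
      calc (∑ s ∈ (C n).filter (fun s => ¬ (β + ϱ ^ 2 / 2 ≤ f s w)), f s w)
          ≤ ((((C n).filter (fun s => ¬ (β + ϱ ^ 2 / 2 ≤ f s w))).card : ℝ)) *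
              (β + ϱ ^ 2 / 2) := hb
        _ ≤ ((C n).card : ℝ) * (β + ϱ ^ 2 / 2) :=
            mul_le_mul_of_nonneg_right hcard hb0
    linarith
  -- g is bounded above
  have hg3 : ∀ w, g w ≤ β + ϱ ^ 2 := by
    intro w
    rw [hg, div_le_iff₀ hhpos]
    have hsplit : ∑ n : Fin h, a n w =
        (∑ n ∈ M w, a n w) + ∑ n ∈ Finset.univ \ M w, a n w := by
      rw [add_comm, Finset.sum_sdiff (Finset.subset_univ _)]
    have h1 : (∑ n ∈ M w, a n w) ≤ ϱ ^ 3 * h := by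
      have := aux_sum_le_card_mul (M w) (fun n => a n w) 1 (fun n _ => ha1 n w)
      rw [mul_one] at this
      exact le_trans this (le_of_lt (hM w))
    have h2 : (∑ n ∈ Finset.univ \ M w, a n w) ≤ (h : ℝ) * (β + ϱ ^ 2 / 2 + ϱ ^ 3) := by
      have hb := aux_sum_le_card_mul (Finset.univ \ M w) (fun n => a n w)
        (β + ϱ ^ 2 / 2 + ϱ ^ 3) (fun n hn => ha2 w n (Finset.mem_sdiff.1 hn).2)
      have hcard : (((Finset.univ \ M w).card : ℝ)) ≤ (h : ℝ) := by
        have hle : (Finset.univ \ M w).card ≤ (Finset.univ : Finset (Fin h)).card :=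
          Finset.card_le_card Finset.sdiff_subset
        have : ((Finset.univ : Finset (Fin h)).card : ℝ) = (h : ℝ) := by simp
        rw [← this]
        exact_mod_cast hle
      have hb0 : (0 : ℝ) ≤ β + ϱ ^ 2 / 2 + ϱ ^ 3 := by linarith
      exact le_trans hb (mul_le_mul_of_nonneg_right hcard hb0)
    have hfinal : ϱ ^ 3 * (h : ℝ) + (h : ℝ) * (β + ϱ ^ 2 / 2 + ϱ ^ 3) ≤
        (β + ϱ ^ 2) * (h : ℝ) := by
      linarith [mul_nonneg hhpos.le (show (0:ℝ) ≤ ϱ ^ 2 / 2 - 2 * ϱ ^ 3 by linarith)]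
    linarith
  -- total average lower bound
  have hsumg : α * (Fintype.card W : ℝ) ≤ ∑ w : W, g w := by
    rw [le_div_iff₀ hWpos] at havg
    exact havg
  -- Markov over W
  set Wstar : Finset W := Finset.univ.filter (fun w => β + ϱ ^ 2 - γ₀ ≤ g w) with hWs
  have hWstarcard : (1 - γ₀) * (Fintype.card W : ℝ) ≤ (Wstar.card : ℝ) := by
    set B : Finset W := Finset.univ.filter (fun w => ¬ (β + ϱ ^ 2 - γ₀ ≤ g w)) with hB
    have hcards : Wstar.card + B.card = Fintype.card W := by
      rw [hWs, hB]
      exact Finset.card_filter_add_card_filter_not _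
    have hsplit : ∑ w : W, (β + ϱ ^ 2 - g w) =
        (∑ w ∈ Wstar, (β + ϱ ^ 2 - g w)) + ∑ w ∈ B, (β + ϱ ^ 2 - g w) :=
      (Finset.sum_filter_add_sum_filter_not _ _ _).symm
    have h1 : 0 ≤ ∑ w ∈ Wstar, (β + ϱ ^ 2 - g w) :=
      Finset.sum_nonneg fun w _ => by linarith [hg3 w]
    have h2 : (B.card : ℝ) * γ₀ ≤ ∑ w ∈ B, (β + ϱ ^ 2 - g w) :=
      aux_card_mul_le_sum B _ γ₀ fun w hw => by
        have := not_le.1 (Finset.mem_filter.1 hw).2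
        linarith
    have h3 : ∑ w : W, (β + ϱ ^ 2 - g w) ≤ γ₀ ^ 2 * (Fintype.card W : ℝ) := by
      have heq : ∑ w : W, (β + ϱ ^ 2 - g w) =
          (Fintype.card W : ℝ) * (β + ϱ ^ 2) - ∑ w : W, g w := by
        rw [Finset.sum_sub_distrib, Finset.sum_const, nsmul_eq_mul]
        simp
      rw [heq, hγ₀sq]
      linarith
    have hBle : (B.card : ℝ) ≤ γ₀ * (Fintype.card W : ℝ) := by
      have hchain : (B.card : ℝ) * γ₀ ≤ γ₀ ^ 2 * (Fintype.card W : ℝ) := by linarith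
      have : (B.card : ℝ) * γ₀ ≤ (γ₀ * (Fintype.card W : ℝ)) * γ₀ := by linarith
      exact le_of_mul_le_mul_right this hγ₀pos
    have hc' : (Wstar.card : ℝ) + (B.card : ℝ) = (Fintype.card W : ℝ) := by
      exact_mod_cast hcards
    linarith
  refine ⟨Wstar, hWstarcard, ?_⟩
  intro w hw
  have hgw : β + ϱ ^ 2 - γ₀ ≤ g w := (Finset.mem_filter.1 hw).2
  -- Markov over cells
  set notM : Finset (Fin h) := Finset.univ \ M w with hnotM
  set Ns : Finset (Fin h) := notM.filter (fun n => β + ϱ ^ 2 - γ₁ ≤ a n w) with hNs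
  set Bd : Finset (Fin h) := notM.filter (fun n => ¬ (β + ϱ ^ 2 - γ₁ ≤ a n w)) with hBd
  have hcards : Ns.card + Bd.card = notM.card := by
    rw [hNs, hBd]
    exact Finset.card_filter_add_card_filter_not _
  have hnotMcard : (notM.card : ℝ) = (h : ℝ) - ((M w).card : ℝ) := by
    have hsub : M w ⊆ Finset.univ := Finset.subset_univ _
    have hcd := Finset.card_sdiff_of_subset hsub
    have hle : (M w).card ≤ (Finset.univ : Finset (Fin h)).card :=
      Finset.card_le_card hsub
    rw [hnotM, hcd, Nat.cast_sub hle]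
    simp
  have hsumall : (β + ϱ ^ 2 - γ₀) * (h : ℝ) ≤ ∑ n : Fin h, a n w := by
    simp only [hg] at hgw
    rw [le_div_iff₀ hhpos] at hgw
    linarith
  -- sum over notM of (β+ϱ²-a) is small
  have hsumnotM : ∑ n ∈ notM, (β + ϱ ^ 2 - a n w) ≤ (γ₀ + ϱ ^ 3) * (h : ℝ) := by
    have hsplit : ∑ n : Fin h, a n w =
        (∑ n ∈ M w, a n w) + ∑ n ∈ notM, a n w := by
      rw [hnotM, add_comm, Finset.sum_sdiff (Finset.subset_univ _)]
    have hMsum : (∑ n ∈ M w, a n w) ≤ ϱ ^ 3 * h := by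
      have := aux_sum_le_card_mul (M w) (fun n => a n w) 1 (fun n _ => ha1 n w)
      rw [mul_one] at this
      exact le_trans this (le_of_lt (hM w))
    have heq : ∑ n ∈ notM, (β + ϱ ^ 2 - a n w) =
        (notM.card : ℝ) * (β + ϱ ^ 2) - ∑ n ∈ notM, a n w := by
      rw [Finset.sum_sub_distrib, Finset.sum_const, nsmul_eq_mul]
    have hnotMle : (notM.card : ℝ) ≤ (h : ℝ) := by
      rw [hnotMcard]
      have : (0 : ℝ) ≤ ((M w).card : ℝ) := Nat.cast_nonneg _
      linarith
    have hbp : (0 : ℝ) ≤ β + ϱ ^ 2 := by linarith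
    have hmul : (notM.card : ℝ) * (β + ϱ ^ 2) ≤ (h : ℝ) * (β + ϱ ^ 2) :=
      mul_le_mul_of_nonneg_right hnotMle hbp
    rw [heq]
    linarith
  have hBdle : (Bd.card : ℝ) ≤ γ₁ * (h : ℝ) := by
    have h1 : (Bd.card : ℝ) * γ₁ ≤ ∑ n ∈ Bd, (β + ϱ ^ 2 - a n w) :=
      aux_card_mul_le_sum Bd _ γ₁ fun n hn => by
        have := not_le.1 (Finset.mem_filter.1 hn).2
        linarith
    have h2 : 0 ≤ ∑ n ∈ Ns, (β + ϱ ^ 2 - a n w) := by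
      apply Finset.sum_nonneg
      intro n hn
      have hnm : n ∉ M w := (Finset.mem_sdiff.1 (Finset.mem_filter.1 hn).1).2
      have := ha2 w n hnm
      linarith
    have hsplit : ∑ n ∈ notM, (β + ϱ ^ 2 - a n w) =
        (∑ n ∈ Ns, (β + ϱ ^ 2 - a n w)) + ∑ n ∈ Bd, (β + ϱ ^ 2 - a n w) :=
      (Finset.sum_filter_add_sum_filter_not _ _ _).symm
    have h3 : (Bd.card : ℝ) * γ₁ ≤ (γ₀ + ϱ ^ 3) * (h : ℝ) := by linarith
    have h4 : γ₀ + ϱ ^ 3 ≤ γ₁ ^ 2 := by linarith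
    have h5 : (Bd.card : ℝ) * γ₁ ≤ (γ₁ * (h : ℝ)) * γ₁ := by
      linarith [mul_le_mul_of_nonneg_right h4 hhpos.le]
    exact le_of_mul_le_mul_right h5 hγ₁pos
  have hNscard : (1 - γ₁ - ϱ ^ 3) * (h : ℝ) ≤ (Ns.card : ℝ) := by
    have hc' : (Ns.card : ℝ) + (Bd.card : ℝ) = (notM.card : ℝ) := by exact_mod_cast hcards
    rw [hnotMcard] at hc'
    have := hM w
    linarith
  refine ⟨Ns, hNscard, ?_⟩
  intro n hn
  have hnm : n ∉ M w := (Finset.mem_sdiff.1 (Finset.mem_filter.1 hn).1).2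
  have han : β + ϱ ^ 2 - γ₁ ≤ a n w := (Finset.mem_filter.1 hn).2
  have hcount : (((C n).filter fun s => β + ϱ ^ 2 / 2 ≤ f s w).card : ℝ) <
      ϱ ^ 3 * (C n).card := by
    by_contra hc
    push_neg at hc
    exact hnm (Finset.mem_filter.2 ⟨Finset.mem_univ n, hc⟩)
  set θ : ℝ := α - γ₀ - γ₁ - γ₂ with hθ
  set T : Finset S := (C n).filter (fun s => θ ≤ f s w) with hT
  set c : ℝ := ((C n).card : ℝ) with hc
  set t : ℝ := (T.card : ℝ) with ht
  clear_value θ T c t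
  -- sum lower bound
  have hslow : (β + ϱ ^ 2 - γ₁) * c ≤ ∑ s ∈ C n, f s w := by
    have h' := han
    rw [ha, le_div_iff₀ (hcpos n)] at h'
    rw [hc]
    linarith
  -- sum upper bound
  have hsup : ∑ s ∈ C n, f s w ≤ ϱ ^ 3 * c + (β + ϱ ^ 2 / 2) * t + θ * (c - t) := by
    have hsplit : ∑ s ∈ C n, f s w =
        (∑ s ∈ T, f s w) + ∑ s ∈ (C n).filter (fun s => ¬ (θ ≤ f s w)), f s w := by
      rw [hT]
      exact (Finset.sum_filter_add_sum_filter_not _ _ _).symm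
    have hTsplit : ∑ s ∈ T, f s w =
        (∑ s ∈ T.filter (fun s => β + ϱ ^ 2 / 2 ≤ f s w), f s w) +
        ∑ s ∈ T.filter (fun s => ¬ (β + ϱ ^ 2 / 2 ≤ f s w)), f s w :=
      (Finset.sum_filter_add_sum_filter_not _ _ _).symm
    have h1 : (∑ s ∈ T.filter (fun s => β + ϱ ^ 2 / 2 ≤ f s w), f s w) ≤ ϱ ^ 3 * c := by
      have hsub : T.filter (fun s => β + ϱ ^ 2 / 2 ≤ f s w) ⊆
          (C n).filter (fun s => β + ϱ ^ 2 / 2 ≤ f s w) := by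
        rw [hT]
        exact Finset.filter_subset_filter _ (Finset.filter_subset _ _)
      have hb := aux_sum_le_card_mul (T.filter (fun s => β + ϱ ^ 2 / 2 ≤ f s w))
        (fun s => f s w) 1 (fun s _ => hf1 s w)
      rw [mul_one] at hb
      have hcd : ((T.filter (fun s => β + ϱ ^ 2 / 2 ≤ f s w)).card : ℝ) ≤
          (((C n).filter fun s => β + ϱ ^ 2 / 2 ≤ f s w).card : ℝ) := by
        exact_mod_cast Finset.card_le_card hsub
      linarith
    have h2 : (∑ s ∈ T.filter (fun s => ¬ (β + ϱ ^ 2 / 2 ≤ f s w)), f s w) ≤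
        (β + ϱ ^ 2 / 2) * t := by
      have hb := aux_sum_le_card_mul (T.filter (fun s => ¬ (β + ϱ ^ 2 / 2 ≤ f s w)))
        (fun s => f s w) (β + ϱ ^ 2 / 2)
        (fun s hs => le_of_lt (not_le.1 (Finset.mem_filter.1 hs).2))
      have hcd : ((T.filter (fun s => ¬ (β + ϱ ^ 2 / 2 ≤ f s w))).card : ℝ) ≤ t := by
        rw [ht]
        exact_mod_cast Finset.card_le_card (Finset.filter_subset _ _)
      have hb0 : (0 : ℝ) ≤ β + ϱ ^ 2 / 2 := by linarith
      calc (∑ s ∈ T.filter (fun s => ¬ (β + ϱ ^ 2 / 2 ≤ f s w)), f s w)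
          ≤ ((T.filter (fun s => ¬ (β + ϱ ^ 2 / 2 ≤ f s w))).card : ℝ) *
              (β + ϱ ^ 2 / 2) := hb
        _ ≤ t * (β + ϱ ^ 2 / 2) := mul_le_mul_of_nonneg_right hcd hb0
        _ = (β + ϱ ^ 2 / 2) * t := mul_comm _ _
    have h3 : (∑ s ∈ (C n).filter (fun s => ¬ (θ ≤ f s w)), f s w) ≤ θ * (c - t) := by
      have hb := aux_sum_le_card_mul ((C n).filter (fun s => ¬ (θ ≤ f s w)))
        (fun s => f s w) θ
        (fun s hs => le_of_lt (not_le.1 (Finset.mem_filter.1 hs).2))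
      have hccard : (((C n).filter (fun s => ¬ (θ ≤ f s w))).card : ℝ) = c - t := by
        have hadd := Finset.card_filter_add_card_filter_not
          (s := C n) (p := fun s => θ ≤ f s w)
        have : ((C n).filter (fun s => θ ≤ f s w)).card +
            ((C n).filter (fun s => ¬ (θ ≤ f s w))).card = (C n).card := hadd
        have := congrArg (fun k : ℕ => (k : ℝ)) this
        push_cast at this
        rw [hT] at ht
        rw [ht, hc]
        linarith [this]
      rw [hccard] at hb
      linarith [hb]
    linarith
  -- final arithmetic
  have htc : t ≤ c := by
    rw [ht, hc, hT]
    exact_mod_cast Finset.card_le_card (Finset.filter_subset _ _)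
  have hBθ : γ₂ ≤ β + ϱ ^ 2 / 2 - θ := by
    rw [hθ]; linarith
  have hcnn : (0 : ℝ) ≤ c := by rw [hc]; exact (hcpos n).le
  have hkey1 : (c - t) * (β + ϱ ^ 2 / 2 - θ) ≤ (γ₁ + ϱ ^ 3) * c := by
    linarith [mul_nonneg hϱsq hcnn]
  have hkey2 : γ₁ + ϱ ^ 3 ≤ γ₂ ^ 2 := by linarith
  have hkey3 : (c - t) * γ₂ ≤ (c - t) * (β + ϱ ^ 2 / 2 - θ) :=
    mul_le_mul_of_nonneg_left hBθ (by linarith)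
  have hkey4 : (c - t) * γ₂ ≤ (γ₂ * c) * γ₂ := by
    linarith [mul_le_mul_of_nonneg_right hkey2 hcnn]
  have hfin : c - t ≤ γ₂ * c := le_of_mul_le_mul_right hkey4 hγ₂pos
  show (1 - γ₂) * c ≤ t
  linarith
end
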